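/- For every nonzero real number x, with B(x) = sin(π(i − 1/x))/sin(π(i + 1/x)), the series ∑_{n ≥ 0} (−1)^n · e^{−2nπ} · B(x)^{n+1} converges absolutely and exp(2iπ/x) = e^{−2π} + (1 − e^{−4π}) · ∑_{n ≥ 0} (−1)^n · e^{−2nπ} · B(x)^{n+1}. (This is an explicit unwinding decomposition of the singular inner function exp(2iπ/x), where B is the Blaschke product whose zeros are the points 1/(j+i), j ∈ ℤ.) -/

import Mathlib

/-!
With `a = e^{-2π}` and `w = e^{2πi/x}`, writing the sines through exponentials shows that
`B(x) = (w - a) / (1 - a w)` is the Blaschke factor at `a` evaluated at `w`; in particular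
`|B(x)| = 1`. Inverting the Blaschke factor gives
`w = (B + a) / (1 + a B) = a + (1 - a²) B / (1 + a B)`, and expanding `B / (1 + a B)` as a geometric
series in `-a B` yields the unwinding series.
-/

open Complex Real ComplexConjugate

section Geometric

variable {𝕜 : Type*} [NormedField 𝕜] {a b : 𝕜}

theorem neg_pow_mul_pow_succ (a b : 𝕜) (n : ℕ) :
    (-a) ^ n * b ^ (n + 1) = (-(a * b)) ^ n * b := by
  rw [pow_succ, neg_pow a, neg_pow (a * b), mul_pow]
  ring

theorem summable_norm_neg_pow_mul_pow_succ (h : ‖a * b‖ < 1) :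
    Summable fun n : ℕ => ‖(-a) ^ n * b ^ (n + 1)‖ := by
  simpa [neg_pow_mul_pow_succ, mul_pow] using
    (summable_geometric_of_lt_one (norm_nonneg _) h).mul_right ‖b‖

theorem hasSum_neg_pow_mul_pow_succ [CompleteSpace 𝕜] (h : ‖a * b‖ < 1) :
    HasSum (fun n : ℕ => (-a) ^ n * b ^ (n + 1)) (b / (1 + a * b)) := by
  simp only [neg_pow_mul_pow_succ]
  rw [div_eq_inv_mul, ← sub_neg_eq_add]
  exact (hasSum_geometric_of_norm_lt_one (by rwa [norm_neg])).mul_right b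

end Geometric

noncomputable def blaschkeFactor (a w : ℂ) : ℂ := (w - a) / (1 - conj a * w)

section Blaschke

variable {a w : ℂ}

theorem blaschkeFactor_eq_inv_canonicalFactor (a w : ℂ) :
    blaschkeFactor a w = (canonicalFactor 1 a w)⁻¹ := by
  simp [blaschkeFactor, canonicalFactor_apply]

theorem norm_blaschkeFactor_of_norm_eq_one (ha : ‖a‖ < 1) (hw : ‖w‖ = 1) :
    ‖blaschkeFactor a w‖ = 1 := by
  rw [blaschkeFactor_eq_inv_canonicalFactor, norm_inv,
    norm_canonicalFactor_eval_circle_eq_one (by simpa using ha) (by simpa using hw), inv_one]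

theorem one_sub_conj_mul_ne_zero (ha : ‖a‖ < 1) (hw : ‖w‖ ≤ 1) :
    1 - conj a * w ≠ 0 := by
  refine sub_ne_zero.mpr fun h => ?_
  have : ‖conj a * w‖ < 1 := by
    rw [norm_mul, RCLike.norm_conj]
    exact mul_lt_one_of_nonneg_of_lt_one_left (norm_nonneg a) ha hw
  simp [← h] at this

theorem blaschkeFactor_eq_neg_add (h : 1 - conj a * w ≠ 0) :
    blaschkeFactor a w = -a + (1 - conj a * a) * (w / (1 - conj a * w)) := by
  rw [blaschkeFactor, eq_neg_add_iff_add_eq, ← mul_div_assoc, add_div' _ _ _ h]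
  ring_nf

theorem blaschkeFactor_neg_blaschkeFactor (ha : ‖a‖ < 1) (hw : ‖w‖ ≤ 1) :
    blaschkeFactor (-a) (blaschkeFactor a w) = w := by
  have hw' := one_sub_conj_mul_ne_zero ha hw
  have hden : 1 * (1 - conj a * w) + conj a * (w - a) = 1 - conj a * a := by ring
  rw [blaschkeFactor, blaschkeFactor, map_neg, neg_mul, sub_neg_eq_add, sub_neg_eq_add,
    div_add' _ _ _ hw', mul_div_assoc', add_div' _ _ _ hw', div_div_div_cancel_right₀ hw', hden,
    div_eq_iff (one_sub_conj_mul_ne_zero ha ha.le)]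
  ring

theorem norm_conj_mul_blaschkeFactor_lt_one (ha : ‖a‖ < 1) (hw : ‖w‖ = 1) :
    ‖conj a * blaschkeFactor a w‖ < 1 := by
  rwa [norm_mul, norm_blaschkeFactor_of_norm_eq_one ha hw, mul_one, RCLike.norm_conj]

theorem eq_add_mul_tsum_blaschkeFactor (ha : ‖a‖ < 1) (hw : ‖w‖ = 1) :
    w = a + (1 - conj a * a) * ∑' n : ℕ, (-conj a) ^ n * blaschkeFactor a w ^ (n + 1) := by
  have hden := one_sub_conj_mul_ne_zero (a := -a) (by rwa [norm_neg])
    (norm_blaschkeFactor_of_norm_eq_one ha hw).le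
  rw [(hasSum_neg_pow_mul_pow_succ (norm_conj_mul_blaschkeFactor_lt_one ha hw)).tsum_eq]
  conv_lhs => rw [← blaschkeFactor_neg_blaschkeFactor ha hw.le, blaschkeFactor_eq_neg_add hden]
  rw [map_neg]
  ring

end Blaschke

theorem sin_eq_exp_mul_exp_sub_exp {u c d e : ℂ} (hd : -u * I = c + d) (he : u * I = c + e) :
    sin u = cexp c * I / 2 * (cexp d - cexp e) := by
  rw [Complex.sin, hd, he, Complex.exp_add, Complex.exp_add]
  ring

theorem sin_pi_mul_I_sub_div_sin_pi_mul_I_add (z : ℂ) :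
    sin (π * (I - z)) / sin (π * (I + z)) =
      blaschkeFactor (Real.exp (-2 * π)) (cexp (2 * π * I * z)) := by
  have hnum := sin_eq_exp_mul_exp_sub_exp (u := π * (I - z)) (c := π - π * I * z)
    (d := 2 * π * I * z) (e := -2 * π) (by linear_combination (-π : ℂ) * I_sq)
    (by linear_combination (π : ℂ) * I_sq)
  have hden := sin_eq_exp_mul_exp_sub_exp (u := π * (I + z)) (c := π - π * I * z)
    (d := 0) (e := -2 * π + 2 * π * I * z) (by linear_combination (-π : ℂ) * I_sq)
    (by linear_combination (π : ℂ) * I_sq)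
  rw [hnum, hden, mul_div_mul_left _ _ (by simp [Complex.exp_ne_zero]), blaschkeFactor,
    Complex.conj_ofReal, Complex.exp_zero, Complex.exp_add, Complex.ofReal_exp]
  push_cast
  rfl

theorem singular_inner_unwinding_general (B : ℝ → ℂ)
    (hB : ∀ x : ℝ, B x =
      Complex.sin ((π : ℂ) * (I - 1 / (x : ℂ))) / Complex.sin ((π : ℂ) * (I + 1 / (x : ℂ))))
    (x : ℝ) :
    Summable (fun n : ℕ =>
      ‖(-1 : ℂ) ^ n * Complex.exp (-2 * (n : ℂ) * (π : ℂ)) * B x ^ (n + 1)‖) ∧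
    Complex.exp (2 * I * (π : ℂ) / (x : ℂ)) =
      Complex.exp (-2 * (π : ℂ)) + (1 - Complex.exp (-4 * (π : ℂ))) *
        ∑' n : ℕ, (-1 : ℂ) ^ n * Complex.exp (-2 * (n : ℂ) * (π : ℂ)) * B x ^ (n + 1) := by
  set r := Real.exp (-2 * π)
  have hrC : (r : ℂ) = cexp (-2 * π) := by simp [r, Complex.ofReal_exp]
  have hr : ‖(r : ℂ)‖ < 1 := by
    rw [Complex.norm_real, Real.norm_of_nonneg (Real.exp_nonneg _), Real.exp_lt_one_iff]
    linarith [Real.pi_pos]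
  set w := cexp (2 * I * π / x)
  have hw : ‖w‖ = 1 := by
    rw [show w = cexp (((2 * π / x : ℝ) : ℂ) * I) by simp only [w]; push_cast; ring_nf]
    exact Complex.norm_exp_ofReal_mul_I _
  have hBx : B x = blaschkeFactor r w := by
    rw [hB, sin_pi_mul_I_sub_div_sin_pi_mul_I_add]
    congr 2
    ring
  have hterm (n : ℕ) :
      (-1 : ℂ) ^ n * cexp (-2 * n * π) * B x ^ (n + 1) = (-(r : ℂ)) ^ n * B x ^ (n + 1) := by
    rw [neg_pow (r : ℂ), hrC, ← Complex.exp_nat_mul]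
    ring_nf
  have hr2 : cexp (-4 * π) = (r : ℂ) ^ 2 := by
    rw [hrC, ← Complex.exp_nat_mul]
    ring_nf
  have hsum := summable_norm_neg_pow_mul_pow_succ (norm_conj_mul_blaschkeFactor_lt_one hr hw)
  have hw_eq := eq_add_mul_tsum_blaschkeFactor hr hw
  simp only [Complex.conj_ofReal, ← hBx] at hsum hw_eq
  simp only [hterm, ← hrC, hr2]
  exact ⟨hsum, by linear_combination hw_eq⟩

/-- Explicit unwinding of the singular inner function `exp(2iπ/x)`: for real `x ≠ 0`, with
`B(x) = sin(π(i − 1/x))/sin(π(i + 1/x))`, the series `∑_{n≥0} (−1)^n e^{−2nπ} B(x)^{n+1}`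
converges absolutely and
`exp(2iπ/x) = e^{−2π} + (1 − e^{−4π})·∑_{n≥0} (−1)^n e^{−2nπ} B(x)^{n+1}`. -/
theorem singular_inner_unwinding (B : ℝ → ℂ)
    (hB : ∀ x : ℝ, B x =
      Complex.sin ((π : ℂ) * (I - 1 / (x : ℂ))) / Complex.sin ((π : ℂ) * (I + 1 / (x : ℂ))))
    (x : ℝ) (hx : x ≠ 0) :
    Summable (fun n : ℕ =>
      ‖(-1 : ℂ) ^ n * Complex.exp (-2 * (n : ℂ) * (π : ℂ)) * B x ^ (n + 1)‖) ∧
    Complex.exp (2 * I * (π : ℂ) / (x : ℂ)) =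
      Complex.exp (-2 * (π : ℂ)) + (1 - Complex.exp (-4 * (π : ℂ))) *
        ∑' n : ℕ, (-1 : ℂ) ^ n * Complex.exp (-2 * (n : ℂ) * (π : ℂ)) * B x ^ (n + 1) :=
  singular_inner_unwinding_general B hB x
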